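/- arXiv:2002.07440 — 2 statements merged into one kernel-verified Lean document; each statement's English description precedes it below -/
import Mathlib

section
/- Let (X, m) be a measure space, (Y, d_Y, ȳ) a pointed CAT(0) space, and u, v ∈ L²(X, Y_ȳ). Then the pointwise geodesic interpolation t ↦ G^{u,v}_t (where G^{u,v}_t(x) is the t-point on the unique Y-geodesic from u(x) to v(x)) is a constant-speed geodesic from u to v in (L²(X, Y_ȳ), d_{L²}), and it is the unique geodesic between u and v: any w ∈ L²(X, Y_ȳ) which is a t-intermediate point between u and v (i.e. d_{L²}(u,w) = t·d_{L²}(u,v) and d_{L²}(w,v) = (1−t)·d_{L²}(u,v)) equals G^{u,v}_t m-a.e. -/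
open MeasureTheory Metric Set Filter Topology

noncomputable section

/-- The `L²` distance between two maps with values in a metric space. -/
def dL2 {X Y : Type*} [MeasurableSpace X] [MetricSpace Y] (μ : Measure X)
    (u v : X → Y) : ℝ :=
  Real.sqrt (∫ x, dist (u x) (v x) ^ 2 ∂μ)

/-- Auxiliary: square of the distance of two L² maps is integrable. -/
lemma distsq_integrable {X Y : Type*} [MeasurableSpace X] (μ : Measure X)
    [MetricSpace Y] (y0 : Y) (f g : X → Y)
    (hf : AEStronglyMeasurable f μ) (hg : AEStronglyMeasurable g μ)
    (hf2 : Integrable (fun x => dist (f x) y0 ^ 2) μ)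
    (hg2 : Integrable (fun x => dist (g x) y0 ^ 2) μ) :
    Integrable (fun x => dist (f x) (g x) ^ 2) μ := by
  have hsm : AEStronglyMeasurable (fun x => dist (f x) (g x) ^ 2) μ :=
    (continuous_pow 2).comp_aestronglyMeasurable (hf.dist hg)
  refine ((hf2.add hg2).const_mul 2).mono' hsm (ae_of_all _ fun x => ?_)
  simp only [Pi.add_apply]
  rw [Real.norm_eq_abs, abs_of_nonneg (sq_nonneg _)]
  have h1 := dist_triangle (f x) y0 (g x)
  have h2 : dist y0 (g x) = dist (g x) y0 := dist_comm _ _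
  nlinarith [@dist_nonneg _ _ (f x) (g x), @dist_nonneg _ _ (f x) y0,
    @dist_nonneg _ _ (g x) y0, sq_nonneg (dist (f x) y0 - dist (g x) y0)]

/-- **Pointwise geodesic interpolation is the unique geodesic in `L²(X,Y)`.** Let
`(X,m)` be a measure space and `(Y,d_Y,ȳ)` a pointed `CAT(0)` space with geodesic
interpolation map `G` (unique constant-speed geodesics, continuous in the endpoints).
For `u, v ∈ L²(X,Y_ȳ)`, the curve `t ↦ G^{u,v}_t`, `G^{u,v}_t(x) = G (u x) (v x) t`,
is a constant-speed geodesic from `u` to `v` in `(L²(X,Y_ȳ), d_{L²})`, and it is the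
unique one: any `w ∈ L²(X,Y_ȳ)` which is a `t`-intermediate point between `u` and `v`
coincides `m`-a.e. with `G^{u,v}_t`. -/
theorem stmt_15 {X Y : Type*} [MeasurableSpace X] (μ : Measure X)
    [MetricSpace Y] [CompleteSpace Y] (ybar : Y)
    (G : Y → Y → ℝ → Y)
    (hG0 : ∀ a b, G a b 0 = a) (hG1 : ∀ a b, G a b 1 = b)
    (hGgeo : ∀ a b, ∀ t ∈ Set.Icc (0:ℝ) 1, ∀ s ∈ Set.Icc (0:ℝ) 1,
      dist (G a b t) (G a b s) = |t - s| * dist a b)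
    (hGcont : ∀ t : ℝ, Continuous (fun p : Y × Y => G p.1 p.2 t))
    (hGuniq : ∀ a b : Y, ∀ t ∈ Set.Icc (0:ℝ) 1, ∀ w : Y,
      dist a w = t * dist a b → dist w b = (1 - t) * dist a b → w = G a b t)
    (hcat : ∀ a b y : Y, ∀ t ∈ Set.Icc (0:ℝ) 1,
      dist y (G a b t) ^ 2 ≤ (1 - t) * dist y a ^ 2 + t * dist y b ^ 2
        - t * (1 - t) * dist a b ^ 2)
    (u v : X → Y)
    (hu : AEStronglyMeasurable u μ) (hv : AEStronglyMeasurable v μ)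
    (hu2 : Integrable (fun x => dist (u x) ybar ^ 2) μ)
    (hv2 : Integrable (fun x => dist (v x) ybar ^ 2) μ) :
    (∀ t ∈ Set.Icc (0:ℝ) 1, ∀ s ∈ Set.Icc (0:ℝ) 1,
      dL2 μ (fun x => G (u x) (v x) t) (fun x => G (u x) (v x) s)
        = |t - s| * dL2 μ u v) ∧
    (fun x => G (u x) (v x) 0) = u ∧ (fun x => G (u x) (v x) 1) = v ∧
    (∀ t ∈ Set.Icc (0:ℝ) 1, ∀ w : X → Y,
      AEStronglyMeasurable w μ → Integrable (fun x => dist (w x) ybar ^ 2) μ →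
      dL2 μ u w = t * dL2 μ u v → dL2 μ w v = (1 - t) * dL2 μ u v →
      ∀ᵐ x ∂μ, w x = G (u x) (v x) t) := by
  have huv2 : Integrable (fun x => dist (u x) (v x) ^ 2) μ :=
    distsq_integrable μ ybar u v hu hv hu2 hv2
  refine ⟨?_, ?_, ?_, ?_⟩
  · intro t ht s hs
    have : (fun x => dist (G (u x) (v x) t) (G (u x) (v x) s) ^ 2)
        = fun x => (t - s) ^ 2 * dist (u x) (v x) ^ 2 := by
      funext x
      rw [hGgeo (u x) (v x) t ht s hs, mul_pow, sq_abs]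
    rw [dL2, this, integral_const_mul, dL2, Real.sqrt_mul (sq_nonneg _),
      Real.sqrt_sq_eq_abs]
  · funext x; exact hG0 _ _
  · funext x; exact hG1 _ _
  · intro t ht w hw hw2 hd1 hd2
    have huw2 : Integrable (fun x => dist (u x) (w x) ^ 2) μ :=
      distsq_integrable μ ybar u w hu hw hu2 hw2
    have hwu2 : Integrable (fun x => dist (w x) (u x) ^ 2) μ :=
      distsq_integrable μ ybar w u hw hu hw2 hu2
    have hwv2 : Integrable (fun x => dist (w x) (v x) ^ 2) μ :=
      distsq_integrable μ ybar w v hw hv hw2 hv2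
    set B := ∫ x, dist (u x) (v x) ^ 2 ∂μ with hB
    have hBnn : 0 ≤ B := integral_nonneg fun x => sq_nonneg _
    have hAnn : 0 ≤ ∫ x, dist (u x) (w x) ^ 2 ∂μ := integral_nonneg fun x => sq_nonneg _
    have hCnn : 0 ≤ ∫ x, dist (w x) (v x) ^ 2 ∂μ := integral_nonneg fun x => sq_nonneg _
    have hA : ∫ x, dist (u x) (w x) ^ 2 ∂μ = t ^ 2 * B := by
      have := congrArg (· ^ 2) hd1
      simpa [dL2, ← hB, Real.sq_sqrt hAnn, Real.sq_sqrt hBnn, mul_pow] using this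
    have hC : ∫ x, dist (w x) (v x) ^ 2 ∂μ = (1 - t) ^ 2 * B := by
      have := congrArg (· ^ 2) hd2
      simpa [dL2, ← hB, Real.sq_sqrt hCnn, Real.sq_sqrt hBnn, mul_pow] using this
    set F : X → ℝ := fun x => (1 - t) * dist (w x) (u x) ^ 2 + t * dist (w x) (v x) ^ 2
      - t * (1 - t) * dist (u x) (v x) ^ 2 with hF
    have hFint : Integrable F μ :=
      ((hwu2.const_mul (1 - t)).add (hwv2.const_mul t)).sub (huv2.const_mul (t * (1 - t)))
    have hle : ∀ x, dist (w x) (G (u x) (v x) t) ^ 2 ≤ F x := fun x =>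
      hcat (u x) (v x) (w x) t ht
    have hFnn : ∀ x, 0 ≤ F x := fun x => le_trans (sq_nonneg _) (hle x)
    have hFzero : ∫ x, F x ∂μ = 0 := by
      have h1 : ∫ x, F x ∂μ = (1 - t) * ∫ x, dist (w x) (u x) ^ 2 ∂μ
          + t * ∫ x, dist (w x) (v x) ^ 2 ∂μ
          - t * (1 - t) * ∫ x, dist (u x) (v x) ^ 2 ∂μ := by
        have hsum : Integrable (fun x => (1 - t) * dist (w x) (u x) ^ 2
            + t * dist (w x) (v x) ^ 2) μ :=
          (hwu2.const_mul (1 - t)).add (hwv2.const_mul t)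
        rw [hF, integral_sub hsum (huv2.const_mul (t * (1 - t))),
          integral_add (hwu2.const_mul (1 - t)) (hwv2.const_mul t),
          integral_const_mul, integral_const_mul, integral_const_mul]
      have h2 : ∫ x, dist (w x) (u x) ^ 2 ∂μ = t ^ 2 * B := by
        rw [← hA]
        exact integral_congr_ae (ae_of_all _ fun x => by simp [dist_comm])
      rw [h1, h2, hC, ← hB]; ring
    have hF0 : ∀ᵐ x ∂μ, F x = 0 :=
      (integral_eq_zero_iff_of_nonneg_ae (ae_of_all _ hFnn) hFint).mp hFzero
    filter_upwards [hF0] with x hx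
    have h3 : dist (w x) (G (u x) (v x) t) ^ 2 ≤ 0 := hx ▸ hle x
    have h4 := le_antisymm h3 (sq_nonneg _)
    rwa [pow_eq_zero_iff (by norm_num), dist_eq_zero] at h4
end
end

section
/- Let (X, d, m) be a metric measure space, (Y, d_Y, ȳ) a pointed complete metric space, (Z, d_Z) a complete metric space, and ι : Y → Z an isometric embedding. Let p ∈ (1,∞) and u ∈ L^p(X, Y_ȳ). Then u ∈ W^{1,p}(X, Y_ȳ) if and only if ι∘u ∈ W^{1,p}(X, Z_{ι(ȳ)}), and in that case the minimal p-weak upper gradients coincide: |Du| = |D(ι∘u)| m-a.e. -/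
open MeasureTheory Metric Set Filter Topology Bornology
open scoped ENNReal NNReal

noncomputable section

/-- The space of continuous curves `[0,1] → X`, with the sup distance. -/
abbrev Curve (X : Type*) [MetricSpace X] : Type _ := C(Set.Icc (0:ℝ) 1, X)

instance curveMeasurableSpace (X : Type*) [MetricSpace X] : MeasurableSpace (Curve X) :=
  borel _

instance (X : Type*) [MetricSpace X] : BorelSpace (Curve X) := ⟨rfl⟩

variable {X : Type*} [MetricSpace X]

/-- Evaluation of a curve at time `t` (times outside `[0,1]` are projected to `[0,1]`). -/
def Curve.ev (γ : Curve X) (t : ℝ) : X := γ (Set.projIcc 0 1 zero_le_one t)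

/-- `f` is an integrable speed bound for the curve `γ`; `γ` is absolutely continuous
iff it admits such a bound, and the metric speed `|γ̇|` is the minimal one. -/
def Curve.IsSpeedBound (γ : Curve X) (f : ℝ → ℝ) : Prop :=
  (∀ t, 0 ≤ f t) ∧ IntegrableOn f (Set.Icc (0:ℝ) 1) volume ∧
    ∀ t s : ℝ, 0 ≤ t → t ≤ s → s ≤ 1 →
      dist (γ.ev t) (γ.ev s) ≤ ∫ r in t..s, f r

/-- The `q`-energy `∫₀¹ |γ̇_t|^q dt` of a curve, as the infimum over speed bounds;
it is `∞` if `γ` is not absolutely continuous. -/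
def Curve.energy (q : ℝ) (γ : Curve X) : ℝ≥0∞ :=
  ⨅ (f : ℝ → ℝ) (_ : γ.IsSpeedBound f),
    ∫⁻ t in Set.Icc (0:ℝ) 1, ENNReal.ofReal (f t ^ q)

/-- The line integral `∫₀¹ G(γ_t) |γ̇_t| dt` of a nonnegative `G` along a curve,
as the infimum over speed bounds; `∞` if `γ` is not absolutely continuous. -/
def Curve.lineInt (G : X → ℝ) (γ : Curve X) : ℝ≥0∞ :=
  ⨅ (f : ℝ → ℝ) (_ : γ.IsSpeedBound f),
    ∫⁻ t in Set.Icc (0:ℝ) 1, ENNReal.ofReal (G (γ.ev t)) * ENNReal.ofReal (f t)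

variable [MeasurableSpace X]

/-- A `q`-test plan on `X` w.r.t. the reference measure `μ`: a Borel probability
measure on curves with finite `q`-energy whose evaluations have bounded compression. -/
def IsTestPlan (q : ℝ) (μ : Measure X) (π : Measure (Curve X)) : Prop :=
  IsProbabilityMeasure π ∧
  (∫⁻ γ, Curve.energy q γ ∂π) < ⊤ ∧
  ∃ C : ℝ≥0, ∀ t ∈ Set.Icc (0:ℝ) 1,
    Measure.map (fun γ : Curve X => γ.ev t) π ≤ C • μ

/-- `G` is a weak upper gradient of `f : X → ℝ` (tested against `q`-test plans). -/
def IsWUG (q : ℝ) (μ : Measure X) (f : X → ℝ) (G : X → ℝ) : Prop :=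
  ∀ π : Measure (Curve X), IsTestPlan q μ π →
    (∫⁻ γ, ENNReal.ofReal |f (γ.ev 1) - f (γ.ev 0)| ∂π) ≤ ∫⁻ γ, Curve.lineInt G γ ∂π

/-- `G` is the minimal `p`-weak upper gradient `|Df|` of `f`. -/
def IsMinimalWUG (p q : ℝ) (μ : Measure X) (f G : X → ℝ) : Prop :=
  (∀ x, 0 ≤ G x) ∧ MemLp G (ENNReal.ofReal p) μ ∧ IsWUG q μ f G ∧
  ∀ G' : X → ℝ, (∀ x, 0 ≤ G' x) → MemLp G' (ENNReal.ofReal p) μ → IsWUG q μ f G' →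
    ∀ᵐ x ∂μ, G x ≤ G' x

/-- `f ∈ W^{1,2}(X)`: `f ∈ L²` and `f` has a 2-weak upper gradient in `L²`. -/
def MemW12 (μ : Measure X) (f : X → ℝ) : Prop :=
  MemLp f 2 μ ∧ ∃ G : X → ℝ, (∀ x, 0 ≤ G x) ∧ MemLp G 2 μ ∧ IsWUG 2 μ f G


variable {X : Type*} [MetricSpace X] [MeasurableSpace X]

/-- `G` is a `p`-weak upper gradient of the metric-space-valued map `u : X → Y`:
`G ∈ L^p`, `G ≥ 0`, and `G` is a weak upper gradient of `φ ∘ u` for every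
1-Lipschitz `φ : Y → ℝ` (so `φ ∘ u ∈ S^p(X)` with `|D(φ∘u)| ≤ G`). -/
def IsMetricWUG (p q : ℝ) (μ : Measure X) {Y : Type*} [MetricSpace Y]
    (u : X → Y) (G : X → ℝ) : Prop :=
  (∀ x, 0 ≤ G x) ∧ MemLp G (ENNReal.ofReal p) μ ∧
  ∀ φ : Y → ℝ, LipschitzWith 1 φ → IsWUG q μ (fun x => φ (u x)) G

/-- `G` is the minimal `p`-weak upper gradient `|Du|` of the metric-valued map `u`. -/
def IsMinimalMetricWUG (p q : ℝ) (μ : Measure X) {Y : Type*} [MetricSpace Y]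
    (u : X → Y) (G : X → ℝ) : Prop :=
  IsMetricWUG p q μ u G ∧
  ∀ G' : X → ℝ, IsMetricWUG p q μ u G' → ∀ᵐ x ∂μ, G x ≤ G' x

/-- **Invariance of metric-valued Sobolev maps under isometric embeddings.** Let
`(X,d,m)` be a metric measure space (complete, separable, `m` nonzero and finite on
bounded sets), `(Y,d_Y,ȳ)` and `(Z,d_Z)` complete metric spaces, `ι : Y → Z` an
isometric embedding, `p,q ∈ (1,∞)` conjugate and `u ∈ L^p(X,Y_ȳ)`. Then
`u ∈ W^{1,p}(X,Y_ȳ)` iff `ι∘u ∈ W^{1,p}(X,Z_{ι ȳ})`, and in that case the minimal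
`p`-weak upper gradients coincide: `|Du| = |D(ι∘u)|` `m`-a.e. -/
theorem stmt_19 {X Y Z : Type*} [MetricSpace X] [CompleteSpace X]
    [SecondCountableTopology X] [MeasurableSpace X] [BorelSpace X]
    [MetricSpace Y] [CompleteSpace Y] [MetricSpace Z] [CompleteSpace Z]
    (μ : Measure X) (hμ0 : μ ≠ 0) (hfin : ∀ s : Set X, IsBounded s → μ s < ⊤)
    (ybar : Y) (ι : Y → Z) (hι : Isometry ι)
    (p q : ℝ) (hp : 1 < p) (hq : 1 < q) (hpq : 1 / p + 1 / q = 1)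
    (u : X → Y) (hmeas : AEStronglyMeasurable u μ)
    (hLp : MemLp (fun x => dist (u x) ybar) (ENNReal.ofReal p) μ) :
    ((∃ G, IsMetricWUG p q μ u G) ↔ (∃ G, IsMetricWUG p q μ (fun x => ι (u x)) G)) ∧
    (∀ G G' : X → ℝ, IsMinimalMetricWUG p q μ u G →
      IsMinimalMetricWUG p q μ (fun x => ι (u x)) G' → G =ᵐ[μ] G') := by
  have key : ∀ G : X → ℝ, IsMetricWUG p q μ u G ↔ IsMetricWUG p q μ (fun x => ι (u x)) G := by
    intro G
    constructor
    · rintro ⟨h0, hLpG, hwug⟩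
      refine ⟨h0, hLpG, fun φ hφ => ?_⟩
      have : LipschitzWith 1 (φ ∘ ι) := by
        simpa using hφ.comp hι.lipschitz
      exact hwug (φ ∘ ι) this
    · rintro ⟨h0, hLpG, hwug⟩
      refine ⟨h0, hLpG, fun ψ hψ => ?_⟩
      -- extend ψ ∘ ι⁻¹ from range ι to Z (McShane)
      have : Nonempty Y := ⟨ybar⟩
      have hinj : Function.Injective ι := hι.injective
      have hlipOn : LipschitzOnWith 1 (ψ ∘ Function.invFun ι) (Set.range ι) := by
        rintro _ ⟨y1, rfl⟩ _ ⟨y2, rfl⟩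
        simp only [Function.comp_apply]
        rw [Function.leftInverse_invFun hinj y1, Function.leftInverse_invFun hinj y2]
        calc edist (ψ y1) (ψ y2) ≤ 1 * edist y1 y2 := hψ y1 y2
          _ = 1 * edist (ι y1) (ι y2) := by rw [hι.edist_eq]
      obtain ⟨φ, hφlip, hφeq⟩ := hlipOn.extend_real
      have heq : ∀ x, φ (ι (u x)) = ψ (u x) := fun x => by
        have := hφeq (Set.mem_range_self (u x))
        rw [Function.comp_apply, Function.leftInverse_invFun hinj (u x)] at this
        exact this.symm
      have := hwug φ hφlip
      simpa only [heq] using this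
  constructor
  · exact ⟨fun ⟨G, h⟩ => ⟨G, (key G).1 h⟩, fun ⟨G, h⟩ => ⟨G, (key G).2 h⟩⟩
  · rintro G G' ⟨hG, hGmin⟩ ⟨hG', hG'min⟩
    have h1 : ∀ᵐ x ∂μ, G x ≤ G' x := hGmin G' ((key G').2 hG')
    have h2 : ∀ᵐ x ∂μ, G' x ≤ G x := hG'min G ((key G).1 hG)
    filter_upwards [h1, h2] with x ha hb
    exact le_antisymm ha hb
end
end
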